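/- If G is a connected graph with γ_t(G) ≤ a(G) + 1, then γ_t(G*) ≤ a(G*) + 1, where G* is the double graph of G. -/

import Mathlib

/-!
Both invariants behave well under doubling. Projecting to the first coordinate and embedding into
the first copy show `γₜ(G*) = γₜ(G)`. Every degree of `G*` is twice the corresponding degree of
`G`, so `m(G*) = 4 m(G)`, and if `S` witnesses `a(G)` then `S × {1, 2}` has degree sum
`4 ∑_{v ∈ S} deg v ≤ m(G*)`, giving `a(G*) ≥ 2 a(G) ≥ a(G)`.
-/

open SimpleGraph

noncomputable def totalDominationNumber {V : Type*} (G : SimpleGraph V) : ℕ :=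
  sInf {k | ∃ D : Finset V, (∀ v : V, ∃ u ∈ D, G.Adj v u) ∧ D.card = k}

noncomputable def annihilationNumber {V : Type*} (G : SimpleGraph V) : ℕ :=
  sSup {k | ∃ S : Finset V, S.card = k ∧ ∑ v ∈ S, (G.neighborSet v).ncard ≤ G.edgeSet.ncard}

def doubleGraph {V : Type*} (G : SimpleGraph V) : SimpleGraph (V × Fin 2) where
  Adj a b := G.Adj a.1 b.1
  symm := ⟨fun _ _ h => G.adj_symm h⟩
  loopless := ⟨fun a h => G.irrefl (v := a.1) h⟩

theorem SimpleGraph.sum_ncard_neighborSet {V : Type*} [Fintype V] (G : SimpleGraph V) :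
    ∑ v, (G.neighborSet v).ncard = 2 * G.edgeSet.ncard := by
  classical
  simp only [← Nat.card_coe_set_eq, Nat.card_eq_fintype_card, card_neighborSet_eq_degree,
    ← edgeFinset_card]
  exact G.sum_degrees_eq_twice_card_edges

section doubleGraph

variable {V : Type*} (G : SimpleGraph V)

theorem doubleGraph_neighborSet (p : V × Fin 2) :
    (doubleGraph G).neighborSet p = G.neighborSet p.1 ×ˢ Set.univ := by
  ext q
  simp [doubleGraph]

theorem ncard_neighborSet_doubleGraph (p : V × Fin 2) :
    ((doubleGraph G).neighborSet p).ncard = 2 * (G.neighborSet p.1).ncard := by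
  rw [doubleGraph_neighborSet, Set.ncard_prod, Set.ncard_univ, Nat.card_fin, mul_comm]

theorem ncard_edgeSet_doubleGraph [Fintype V] :
    (doubleGraph G).edgeSet.ncard = 4 * G.edgeSet.ncard := by
  have h := (doubleGraph G).sum_ncard_neighborSet
  simp only [Fintype.sum_prod_type, ncard_neighborSet_doubleGraph, Finset.sum_const,
    Finset.card_univ, Fintype.card_fin, smul_eq_mul, ← Finset.mul_sum,
    G.sum_ncard_neighborSet] at h
  omega

theorem totalDominationNumber_doubleGraph :
    totalDominationNumber (doubleGraph G) = totalDominationNumber G := by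
  classical
  apply csInf_eq_csInf_of_forall_exists_le
  · rintro _ ⟨D, hD, rfl⟩
    refine ⟨_, ⟨D.image Prod.fst, fun v => ?_, rfl⟩, Finset.card_image_le⟩
    obtain ⟨u, hu, hvu⟩ := hD (v, 0)
    exact ⟨u.1, Finset.mem_image_of_mem _ hu, hvu⟩
  · rintro _ ⟨D, hD, rfl⟩
    refine ⟨_, ⟨D.map (.sectL V 0), fun p => ?_, rfl⟩, (Finset.card_map _).le⟩
    obtain ⟨u, hu, hpu⟩ := hD p.1
    exact ⟨(u, 0), Finset.mem_map_of_mem _ hu, hpu⟩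

end doubleGraph

section annihilationNumber

variable {V : Type*} [Fintype V] (G : SimpleGraph V)

theorem bddAbove_annihilationNumber_set :
    BddAbove {k | ∃ S : Finset V, S.card = k ∧
      ∑ v ∈ S, (G.neighborSet v).ncard ≤ G.edgeSet.ncard} :=
  ⟨Fintype.card V, fun _ ⟨S, hS, _⟩ => hS ▸ S.card_le_univ⟩

theorem exists_card_eq_annihilationNumber : ∃ S : Finset V, S.card = annihilationNumber G ∧
    ∑ v ∈ S, (G.neighborSet v).ncard ≤ G.edgeSet.ncard :=
  (Nat.sSup_mem ⟨0, ∅, by simp⟩ (bddAbove_annihilationNumber_set G) : annihilationNumber G ∈ _)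

theorem card_le_annihilationNumber {S : Finset V}
    (hS : ∑ v ∈ S, (G.neighborSet v).ncard ≤ G.edgeSet.ncard) :
    S.card ≤ annihilationNumber G :=
  le_csSup (bddAbove_annihilationNumber_set G) ⟨S, rfl, hS⟩

theorem two_mul_annihilationNumber_le_doubleGraph :
    2 * annihilationNumber G ≤ annihilationNumber (doubleGraph G) := by
  obtain ⟨S, hcard, hsum⟩ := exists_card_eq_annihilationNumber G
  have hdouble := card_le_annihilationNumber (doubleGraph G) (S := S ×ˢ Finset.univ) <| by
    simp only [Finset.sum_product, ncard_neighborSet_doubleGraph, Finset.sum_const,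
      Finset.card_univ, Fintype.card_fin, smul_eq_mul, ← mul_assoc, ← Finset.mul_sum,
      ncard_edgeSet_doubleGraph]
    omega
  simpa [hcard, mul_comm] using hdouble

end annihilationNumber

theorem stmt_8_general {V : Type*} [Fintype V] (G : SimpleGraph V)
    (h : totalDominationNumber G ≤ annihilationNumber G + 1) :
    totalDominationNumber (doubleGraph G) ≤ annihilationNumber (doubleGraph G) + 1 := by
  have := two_mul_annihilationNumber_le_doubleGraph G
  rw [totalDominationNumber_doubleGraph]
  omega

/-- If `G` is a connected graph (with at least two vertices) satisfying
`γₜ(G) ≤ a(G) + 1`, then `γₜ(G*) ≤ a(G*) + 1`. -/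
theorem stmt_8 {V : Type*} [Fintype V] (G : SimpleGraph V)
    (hconn : G.Connected) (hn : 2 ≤ Fintype.card V)
    (h : totalDominationNumber G ≤ annihilationNumber G + 1) :
    totalDominationNumber (doubleGraph G) ≤ annihilationNumber (doubleGraph G) + 1 :=
  stmt_8_general G h
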